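/- For the product field Y_i = X_i X_{i+k} (k ∈ Z^d fixed), the physical dependence measure satisfies δ_{i,p/2}(Y) ≤ ||X_0||_p (δ_{i+k,p} + δ_{i,p}) for any p ≥ 2. Consequently, if Δ_4 = Σ_{i∈Z^d} δ_{i,4} < ∞, then Σ_{i∈Z^d} δ_{i,2}(Y) < ∞. -/

import Mathlib

/-!
The inputs `s ↦ ε_{i-s}` of `X_i` and `X_i*` (for `X_i*` with `ε_0` replaced by `ε'_0`) are
injective reindexings of one i.i.d. family, so they all have the same product law; hence `X_i`
and `X_i*` have the law, in particular the `L^p` norm, of `X_0`. Writing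
`Y_i - Y_i* = X_i (X_{i+k} - X_{i+k}*) + (X_i - X_i*) X_{i+k}*`, Minkowski in `L^{p/2}`
(`p/2 ≥ 1`) and Hölder with `2/p = 1/p + 1/p` give the bound; summing it over `i` and reindexing
`i ↦ i + k` gives the summability.
-/
open MeasureTheory ProbabilityTheory Filter
open scoped ENNReal

lemma ENNReal.holderTriple_div_two (p : ℝ≥0∞) : ENNReal.HolderTriple p p (p / 2) where
  inv_add_inv_eq_inv := by
    rw [ENNReal.inv_div (Or.inl ENNReal.ofNat_ne_top) (Or.inl two_ne_zero), ← two_mul,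
      div_eq_mul_inv]

lemma MeasureTheory.eLpNorm_mul_sub_mul_le {α 𝕜 : Type*} [MeasurableSpace α] {μ : Measure α}
    [NormedRing 𝕜] {p : ℝ≥0∞} (hp : 2 ≤ p) {a b a' b' : α → 𝕜}
    (ha : AEStronglyMeasurable a μ) (hb : AEStronglyMeasurable b μ)
    (ha' : AEStronglyMeasurable a' μ) (hb' : AEStronglyMeasurable b' μ) :
    eLpNorm (a * b - a' * b') (p / 2) μ
      ≤ eLpNorm a p μ * eLpNorm (b - b') p μ + eLpNorm (a - a') p μ * eLpNorm b' p μ := by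
  have := ENNReal.holderTriple_div_two p
  have hp2 : 1 ≤ p / 2 := by
    rw [ENNReal.le_div_iff_mul_le (Or.inl two_ne_zero) (Or.inl ENNReal.ofNat_ne_top), one_mul]
    exact hp
  calc eLpNorm (a * b - a' * b') (p / 2) μ
      = eLpNorm (a * (b - b') + (a - a') * b') (p / 2) μ := by
        rw [mul_sub, sub_mul, sub_add_sub_cancel]
    _ ≤ eLpNorm (a * (b - b')) (p / 2) μ + eLpNorm ((a - a') * b') (p / 2) μ :=
        eLpNorm_add_le (ha.mul (hb.sub hb')) ((ha.sub ha').mul hb') hp2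
    _ ≤ _ := add_le_add (eLpNorm_smul_le_mul_eLpNorm (𝕜 := 𝕜) (E := 𝕜) (hb.sub hb') ha)
        (eLpNorm_smul_le_mul_eLpNorm (𝕜 := 𝕜) (E := 𝕜) hb' (ha.sub ha'))

lemma ENNReal.tsum_mul_add_comp_add_right_ne_top {G : Type*} [AddGroup G] {C : ℝ≥0∞}
    (hC : C ≠ ∞) {δ : G → ℝ≥0∞} (hδ : ∑' i, δ i ≠ ∞) (k : G) :
    ∑' i, C * (δ (i + k) + δ i) ≠ ∞ := by
  have hshift : ∑' i, δ (i + k) = ∑' i, δ i := (Equiv.addRight k).tsum_eq δ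
  rw [ENNReal.tsum_mul_left, ENNReal.tsum_add, hshift]
  exact ENNReal.mul_ne_top hC (ENNReal.add_ne_top.2 ⟨hδ, hδ⟩)

section IdentDistrib

variable {Ω E : Type*} [MeasurableSpace Ω] [MeasurableSpace E] {μ : Measure Ω}

lemma ProbabilityTheory.iIndepFun.identDistrib_precomp {J S : Type*} {f : J → Ω → E}
    (hf : ∀ j, Measurable (f j)) (hindep : iIndepFun f μ) {σ τ : S → J} (hσ : σ.Injective)
    (hτ : τ.Injective) (hlaw : ∀ s, μ.map (f (σ s)) = μ.map (f (τ s))) :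
    IdentDistrib (fun ω s => f (σ s) ω) (fun ω s => f (τ s) ω) μ μ where
  aemeasurable_fst := (measurable_pi_lambda _ fun _ => hf _).aemeasurable
  aemeasurable_snd := (measurable_pi_lambda _ fun _ => hf _).aemeasurable
  map_eq := by
    rw [(hindep.precomp hσ).map_fun_eq_infinitePi_map fun _ => hf _,
      (hindep.precomp hτ).map_fun_eq_infinitePi_map fun _ => hf _, funext hlaw]

lemma identDistrib_shift_input {G : Type*} [AddGroup G] {ε : G → Ω → E}
    (hε : ∀ j, Measurable (ε j)) (hindep : iIndepFun ε μ)
    (hident : ∀ j j', μ.map (ε j) = μ.map (ε j')) (i i' : G) :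
    IdentDistrib (fun ω s => ε (i - s) ω) (fun ω s => ε (i' - s) ω) μ μ :=
  hindep.identDistrib_precomp hε sub_right_injective sub_right_injective fun _ => hident _ _

lemma identDistrib_coupled_input {G : Type*} [AddGroup G] [DecidableEq G] {ε : G → Ω → E}
    {ε₀' : Ω → E} (hε : ∀ j, Measurable (ε j)) (hε₀' : Measurable ε₀')
    (hindep : iIndepFun (Sum.elim ε fun _ : Unit => ε₀') μ)
    (hident : ∀ j, μ.map (ε j) = μ.map ε₀') (i i' : G) :
    IdentDistrib (fun ω s => if i - s = 0 then ε₀' ω else ε (i - s) ω)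
      (fun ω s => ε (i' - s) ω) μ μ := by
  set f := Sum.elim ε fun _ : Unit => ε₀'
  let replaceZero : G → G ⊕ Unit := fun x => if x = 0 then .inr () else .inl x
  have hreplace : replaceZero.Injective := by
    intro x y h
    by_cases hx : x = 0 <;> by_cases hy : y = 0 <;> simp_all [replaceZero]
  have hcoupled : (fun ω s => if i - s = 0 then ε₀' ω else ε (i - s) ω)
      = fun ω s => f (replaceZero (i - s)) ω := by
    funext ω s; by_cases h : i - s = 0 <;> simp [h, f, replaceZero]
  have hmarg : ∀ x, μ.map (f x) = μ.map ε₀' := by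
    rintro (j | _)
    exacts [hident j, rfl]
  rw [hcoupled]
  exact hindep.identDistrib_precomp (by rintro (j | _); exacts [hε j, hε₀'])
    (hreplace.comp sub_right_injective) (Sum.inl_injective.comp sub_right_injective)
    fun s => (hmarg _).trans (hmarg _).symm

end IdentDistrib

/-- For the product field `Y_i = X_i X_{i+k}` (with coupled version
`Y_i* = X_i* X_{i+k}*`), one has `δ_{i,p/2}(Y) ≤ ‖X_0‖_p (δ_{i+k,p} + δ_{i,p})` for
`p ≥ 2`; consequently if `Δ_4 = Σ_i δ_{i,4} < ∞` then `Σ_i δ_{i,2}(Y) < ∞`. -/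
theorem stmt_8 {d : ℕ} {Ω : Type*} [MeasurableSpace Ω] (μ : Measure Ω)
    [IsProbabilityMeasure μ]
    (ε : (Fin d → ℤ) → Ω → ℝ) (ε0' : Ω → ℝ)
    (hmeas : ∀ j, Measurable (ε j)) (hmeas' : Measurable ε0')
    (hindep : iIndepFun (Sum.elim ε (fun _ : Unit => ε0')) μ)
    (hident : ∀ j, Measure.map (ε j) μ = Measure.map ε0' μ)
    (g : ((Fin d → ℤ) → ℝ) → ℝ) (hg : Measurable g)
    (X Xstar : (Fin d → ℤ) → Ω → ℝ)
    (hX : ∀ i ω, X i ω = g (fun s => ε (i - s) ω))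
    (hXstar : ∀ i ω, Xstar i ω = g (fun s => if i - s = 0 then ε0' ω else ε (i - s) ω))
    (k : Fin d → ℤ)
    (Y Ystar : (Fin d → ℤ) → Ω → ℝ)
    (hY : ∀ i ω, Y i ω = X i ω * X (i + k) ω)
    (hYstar : ∀ i ω, Ystar i ω = Xstar i ω * Xstar (i + k) ω) :
    (∀ p : ℝ≥0∞, 2 ≤ p → (∀ i, MemLp (X i) p μ) →
        ∀ i, eLpNorm (Y i - Ystar i) (p / 2) μ
          ≤ eLpNorm (X 0) p μ
            * (eLpNorm (X (i + k) - Xstar (i + k)) p μ + eLpNorm (X i - Xstar i) p μ))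
      ∧ ((∀ i, MemLp (X i) 4 μ) →
          (∑' i : Fin d → ℤ, eLpNorm (X i - Xstar i) 4 μ) ≠ ∞ →
          (∑' i : Fin d → ℤ, eLpNorm (Y i - Ystar i) 2 μ) ≠ ∞) := by
  have hXfun : ∀ i, X i = g ∘ fun ω s => ε (i - s) ω := fun i => funext (hX i)
  have hXlaw : ∀ i, IdentDistrib (X i) (X 0) μ μ := fun i => by
    have hε : iIndepFun ε μ := (hindep.precomp Sum.inl_injective :)
    rw [hXfun, hXfun]
    exact (identDistrib_shift_input hmeas hε
      (fun j j' => (hident j).trans (hident j').symm) i 0).comp hg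
  have hXstarlaw : ∀ i, IdentDistrib (Xstar i) (X 0) μ μ := fun i => by
    rw [show Xstar i = _ from funext (hXstar i), hXfun]
    exact (identDistrib_coupled_input hmeas hmeas' hindep hident i 0).comp hg
  have hδY : ∀ p, 2 ≤ p → ∀ i, eLpNorm (Y i - Ystar i) (p / 2) μ
      ≤ eLpNorm (X 0) p μ
        * (eLpNorm (X (i + k) - Xstar (i + k)) p μ + eLpNorm (X i - Xstar i) p μ) := by
    intro p hp i
    rw [show Y i = X i * X (i + k) from funext (hY i),
      show Ystar i = Xstar i * Xstar (i + k) from funext (hYstar i)]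
    calc _ ≤ eLpNorm (X i) p μ * eLpNorm (X (i + k) - Xstar (i + k)) p μ
          + eLpNorm (X i - Xstar i) p μ * eLpNorm (Xstar (i + k)) p μ :=
          eLpNorm_mul_sub_mul_le hp (hXlaw i).aemeasurable_fst.aestronglyMeasurable
            (hXlaw _).aemeasurable_fst.aestronglyMeasurable
            (hXstarlaw i).aemeasurable_fst.aestronglyMeasurable
            (hXstarlaw _).aemeasurable_fst.aestronglyMeasurable
      _ = _ := by rw [(hXlaw i).eLpNorm_eq, (hXstarlaw _).eLpNorm_eq]; ring
  refine ⟨fun p hp _ => hδY p hp, fun hX4 hΔ => ?_⟩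
  have hδY4 := hδY 4 (by norm_num)
  rw [show (4 : ℝ≥0∞) / 2 = 2 by
    rw [eq_comm, ENNReal.eq_div_iff two_ne_zero ENNReal.ofNat_ne_top]; norm_num] at hδY4
  exact ne_top_of_le_ne_top (ENNReal.tsum_mul_add_comp_add_right_ne_top
    (δ := fun i => eLpNorm (X i - Xstar i) 4 μ) (hX4 0).eLpNorm_ne_top hΔ k)
    (ENNReal.tsum_le_tsum hδY4)
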